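/- Let α = 3 - 2√2. For n ≥ 1, with r(p_0,q_n) = n - 1 - √2 + 2√2/(1 - α^{n+1}) and r(p_0,p_n) = n - 1 - √2 + 2√2/(1 + α^{n+1}), one has r(p_0,q_n) - r(p_0,p_n) = 4α^n(3√2 - 4)/(1 - α^{2n+2}), and in particular r(p_0,q_n) > r(p_0,p_n). -/

import Mathlib

/-! Both resistances differ only in the term `2√2 / (1 ∓ α^(n+1))`, and
`c / (1 - x) - c / (1 + x) = 2cx / (1 - x²)`; with `x = α^(n+1)` and `√2 α = 3√2 - 4` this is
the stated difference, which is positive because `0 < α < 1`. -/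

lemma div_one_sub_sub_div_one_add {K : Type*} [Field K] (c x : K) (h₁ : 1 - x ≠ 0)
    (h₂ : 1 + x ≠ 0) : c / (1 - x) - c / (1 + x) = 2 * c * x / (1 - x ^ 2) := by
  rw [div_sub_div _ _ h₁ h₂]
  congr 1 <;> ring

lemma sqrt_two_mul_three_sub_two_sqrt_two : √2 * (3 - 2 * √2) = 3 * √2 - 4 := by
  linear_combination (-2 : ℝ) * Real.sq_sqrt (zero_le_two : (0 : ℝ) ≤ 2)

lemma three_sub_two_sqrt_two_pos : 0 < 3 - 2 * √2 := by
  nlinarith [Real.sq_sqrt (zero_le_two : (0 : ℝ) ≤ 2), Real.sqrt_nonneg 2]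

lemma three_sub_two_sqrt_two_lt_one : 3 - 2 * √2 < 1 := by
  linarith [Real.one_lt_sqrt_two]

theorem stmt_8_general (α : ℝ) (hα : α = 3 - 2 * Real.sqrt 2) (n : ℕ)
    (rq rp : ℝ)
    (hq : rq = (n : ℝ) - 1 - Real.sqrt 2 + 2 * Real.sqrt 2 / (1 - α ^ (n + 1)))
    (hp : rp = (n : ℝ) - 1 - Real.sqrt 2 + 2 * Real.sqrt 2 / (1 + α ^ (n + 1))) :
    rq - rp = 4 * α ^ n * (3 * Real.sqrt 2 - 4) / (1 - α ^ (2 * n + 2)) ∧ rq > rp := by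
  have hα₀ : 0 < α := hα ▸ three_sub_two_sqrt_two_pos
  have hx₀ : 0 < α ^ (n + 1) := pow_pos hα₀ _
  have hx₁ : α ^ (n + 1) < 1 :=
    pow_lt_one₀ hα₀.le (hα ▸ three_sub_two_sqrt_two_lt_one) n.succ_ne_zero
  have hdiff : rq - rp = 2 * (2 * √2) * α ^ (n + 1) / (1 - (α ^ (n + 1)) ^ 2) := by
    rw [hq, hp, add_sub_add_left_eq_sub,
      div_one_sub_sub_div_one_add _ _ (by linarith) (by linarith)]
  constructor
  · rw [hdiff, ← sqrt_two_mul_three_sub_two_sqrt_two, ← hα]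
    ring
  · have hpos : 0 < 2 * (2 * √2) * α ^ (n + 1) / (1 - (α ^ (n + 1)) ^ 2) :=
      div_pos (by positivity) (by nlinarith)
    linarith

theorem stmt_8 (α : ℝ) (hα : α = 3 - 2 * Real.sqrt 2) (n : ℕ) (hn : 1 ≤ n)
    (rq rp : ℝ)
    (hq : rq = (n : ℝ) - 1 - Real.sqrt 2 + 2 * Real.sqrt 2 / (1 - α ^ (n + 1)))
    (hp : rp = (n : ℝ) - 1 - Real.sqrt 2 + 2 * Real.sqrt 2 / (1 + α ^ (n + 1))) :
    rq - rp = 4 * α ^ n * (3 * Real.sqrt 2 - 4) / (1 - α ^ (2 * n + 2)) ∧ rq > rp :=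
  stmt_8_general α hα n rq rp hq hp
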